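/- arXiv:1805.01701 — 4 statements merged into one kernel-verified Lean document; each statement's English description precedes it below -/
import Mathlib

section
/- Let σ be a finite type and let S and T be two finite sets of nonzero homogeneous multivariate polynomials of positive degree in MvPolynomial σ ℝ such that the ℝ-subalgebras they generate coincide, Algebra.adjoin ℝ S = Algebra.adjoin ℝ T, and such that both S and T are minimal generating sets (no element of S lies in Algebra.adjoin ℝ (S \ {f}), and likewise for T). Then for every positive integer m, the number of elements of S that are homogeneous of degree m equals the number of elements of T that are homogeneous of degree m. -/
open MvPolynomial

namespace MIBAux

variable {σ : Type*}

/-- The degree-`n` homogeneous part of a subalgebra. -/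
noncomputable def V (A : Subalgebra ℝ (MvPolynomial σ ℝ)) (n : ℕ) : Submodule ℝ (MvPolynomial σ ℝ) :=
  Subalgebra.toSubmodule A ⊓ homogeneousSubmodule σ ℝ n

/-- The decomposable elements of degree `m`. -/
noncomputable def D (A : Subalgebra ℝ (MvPolynomial σ ℝ)) (m : ℕ) : Submodule ℝ (MvPolynomial σ ℝ) :=
  Submodule.span ℝ {x | ∃ i j, 0 < i ∧ 0 < j ∧ i + j = m ∧
    ∃ p ∈ V A i, ∃ q ∈ V A j, x = p * q}

section lemmas

variable (S : Finset (MvPolynomial σ ℝ))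
  (hS0 : ∀ f ∈ S, f ≠ 0)
  (hShom : ∀ f ∈ S, ∃ d : ℕ, 0 < d ∧ f.IsHomogeneous d)

include hS0 hShom in
/-- Every element of the monoid closure is nonzero and homogeneous. -/
theorem L0 : ∀ w ∈ Submonoid.closure (S : Set (MvPolynomial σ ℝ)),
    ∃ d : ℕ, w ≠ 0 ∧ w.IsHomogeneous d := by
  intro w hw
  induction hw using Submonoid.closure_induction with
  | mem x hx =>
    obtain ⟨d, _, hd⟩ := hShom x hx
    exact ⟨d, hS0 x hx, hd⟩
  | one => exact ⟨0, one_ne_zero, isHomogeneous_one σ ℝ⟩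
  | mul a b ha hb iha ihb =>
    obtain ⟨da, ha0, hda⟩ := iha
    obtain ⟨db, hb0, hdb⟩ := ihb
    exact ⟨da + db, mul_ne_zero ha0 hb0, hda.mul hdb⟩

theorem closure_subset_adjoin : ∀ w ∈ Submonoid.closure (S : Set (MvPolynomial σ ℝ)),
    w ∈ Algebra.adjoin ℝ (S : Set (MvPolynomial σ ℝ)) := by
  intro w hw
  rw [← Subalgebra.mem_toSubmodule, Algebra.adjoin_eq_span]
  exact Submodule.subset_span hw

include hS0 hShom in
/-- Homogeneous components of elements of the adjoin are spanned by homogeneous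
closure elements. -/
theorem L1 : ∀ x ∈ Algebra.adjoin ℝ (S : Set (MvPolynomial σ ℝ)), ∀ n : ℕ,
    homogeneousComponent n x ∈ Submodule.span ℝ
      {w : MvPolynomial σ ℝ |
        w ∈ Submonoid.closure (S : Set (MvPolynomial σ ℝ)) ∧ w.IsHomogeneous n} := by
  intro x hx n
  rw [← Subalgebra.mem_toSubmodule, Algebra.adjoin_eq_span] at hx
  have hle : Submodule.span ℝ ((Submonoid.closure (S : Set (MvPolynomial σ ℝ)) : Set _)) ≤
      Submodule.comap (homogeneousComponent n)
        (Submodule.span ℝ {w : MvPolynomial σ ℝ |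
          w ∈ Submonoid.closure (S : Set (MvPolynomial σ ℝ)) ∧ w.IsHomogeneous n}) := by
    rw [Submodule.span_le]
    intro w hw
    obtain ⟨d, hw0, hwd⟩ := L0 S hS0 hShom w hw
    rw [SetLike.mem_coe, Submodule.mem_comap]
    rw [homogeneousComponent_of_mem ((mem_homogeneousSubmodule d w).2 hwd)]
    by_cases h : n = d
    · subst h
      simp only [if_pos rfl]
      exact Submodule.subset_span ⟨hw, hwd⟩
    · rw [if_neg h]; exact Submodule.zero_mem _
  exact hle hx

include hS0 hShom in
theorem L2 {A : Subalgebra ℝ (MvPolynomial σ ℝ)}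
    (hA : A = Algebra.adjoin ℝ (S : Set (MvPolynomial σ ℝ))) {n : ℕ}
    {x : MvPolynomial σ ℝ} (hx : x ∈ V A n) :
    x ∈ Submodule.span ℝ
      {w : MvPolynomial σ ℝ |
        w ∈ Submonoid.closure (S : Set (MvPolynomial σ ℝ)) ∧ w.IsHomogeneous n} := by
  subst hA
  obtain ⟨hxA, hxh⟩ := Submodule.mem_inf.1 hx
  rw [mem_homogeneousSubmodule] at hxh
  have := L1 S hS0 hShom x hxA n
  rwa [homogeneousComponent_of_mem ((mem_homogeneousSubmodule n x).2 hxh), if_pos rfl] at this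

open scoped Classical in
include hS0 hShom in
theorem L3 (m : ℕ) (hm : 0 < m) :
    ∀ w ∈ Submonoid.closure (S : Set (MvPolynomial σ ℝ)), w.IsHomogeneous m →
      w ∈ Submodule.span ℝ
          ((S.filter (fun f => f.IsHomogeneous m) : Finset (MvPolynomial σ ℝ)) :
            Set (MvPolynomial σ ℝ))
        ⊔ D (Algebra.adjoin ℝ (S : Set (MvPolynomial σ ℝ))) m := by
  intro w hw
  induction hw using Submonoid.closure_induction with
  | mem f hf =>
    intro hfm
    exact Submodule.mem_sup_left (Submodule.subset_span
      (Finset.mem_coe.2 (Finset.mem_filter.2 ⟨hf, hfm⟩)))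
  | one =>
    intro h1
    exact absurd (h1.inj_right (isHomogeneous_one σ ℝ) one_ne_zero) hm.ne'
  | mul a b ha hb iha ihb =>
    intro hab
    obtain ⟨i, ha0, hai⟩ := L0 S hS0 hShom a ha
    obtain ⟨j, hb0, hbj⟩ := L0 S hS0 hShom b hb
    have hne : a * b ≠ 0 := mul_ne_zero ha0 hb0
    have hij : i + j = m := (hai.mul hbj).inj_right hab hne
    rcases Nat.eq_zero_or_pos i with hi | hi
    · subst hi
      have hjm : j = m := by simpa using hij
      subst hjm
      have haC : a = C (coeff 0 a) := by
        have h1 := homogeneousComponent_of_mem ((mem_homogeneousSubmodule 0 a).2 hai)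
          (m := 0)
        rw [if_pos rfl] at h1
        exact h1.symm.trans (by rw [homogeneousComponent_zero])
      have : a * b = (coeff 0 a) • b := by
        rw [smul_eq_C_mul, ← haC]
      rw [this]
      exact Submodule.smul_mem _ _ (ihb hbj)
    rcases Nat.eq_zero_or_pos j with hj | hj
    · subst hj
      have him : i = m := by simpa using hij
      subst him
      have hbC : b = C (coeff 0 b) := by
        have h1 := homogeneousComponent_of_mem ((mem_homogeneousSubmodule 0 b).2 hbj)
          (m := 0)
        rw [if_pos rfl] at h1
        exact h1.symm.trans (by rw [homogeneousComponent_zero])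
      have : a * b = (coeff 0 b) • a := by
        rw [smul_eq_C_mul, ← hbC, mul_comm]
      rw [this]
      exact Submodule.smul_mem _ _ (iha hai)
    · refine Submodule.mem_sup_right (Submodule.subset_span ?_)
      refine ⟨i, j, hi, hj, hij, a, ?_, b, ?_, rfl⟩
      · exact Submodule.mem_inf.2 ⟨(Subalgebra.mem_toSubmodule _).2
          (closure_subset_adjoin S a ha), (mem_homogeneousSubmodule i a).2 hai⟩
      · exact Submodule.mem_inf.2 ⟨(Subalgebra.mem_toSubmodule _).2
          (closure_subset_adjoin S b hb), (mem_homogeneousSubmodule j b).2 hbj⟩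

include hS0 hShom in
/-- Low-degree homogeneous closure elements avoid a degree-`m` generator. -/
theorem L4 (m : ℕ) (f₀ : MvPolynomial σ ℝ) (hf₀ : f₀.IsHomogeneous m) (hf₀0 : f₀ ≠ 0) :
    ∀ w ∈ Submonoid.closure (S : Set (MvPolynomial σ ℝ)), ∀ i : ℕ, i < m →
      w.IsHomogeneous i →
      w ∈ Algebra.adjoin ℝ ((S : Set (MvPolynomial σ ℝ)) \ {f₀}) := by
  intro w hw
  induction hw using Submonoid.closure_induction with
  | mem g hg =>
    intro i hi hgi
    by_cases hgf : g = f₀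
    · subst hgf
      exact absurd (hgi.inj_right hf₀ hf₀0) hi.ne
    · exact Algebra.subset_adjoin ⟨hg, hgf⟩
  | one => intro i _ _; exact Subalgebra.one_mem _
  | mul a b ha hb iha ihb =>
    intro i hi hab
    obtain ⟨α, ha0, haα⟩ := L0 S hS0 hShom a ha
    obtain ⟨β, hb0, hbβ⟩ := L0 S hS0 hShom b hb
    have hne : a * b ≠ 0 := mul_ne_zero ha0 hb0
    have hαβ : α + β = i := (haα.mul hbβ).inj_right hab hne
    have hα : α < m := lt_of_le_of_lt (hαβ ▸ Nat.le_add_right α β) hi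
    have hβ : β < m := lt_of_le_of_lt (hαβ ▸ Nat.le_add_left β α) hi
    exact mul_mem (iha α hα haα) (ihb β hβ hbβ)

include hS0 hShom in
/-- Decomposables of degree `m` lie in the adjoin of `S` minus a degree-`m` generator. -/
theorem L5 (m : ℕ) (f₀ : MvPolynomial σ ℝ) (hf₀ : f₀.IsHomogeneous m) (hf₀0 : f₀ ≠ 0) :
    D (Algebra.adjoin ℝ (S : Set (MvPolynomial σ ℝ))) m ≤
      Subalgebra.toSubmodule (Algebra.adjoin ℝ ((S : Set (MvPolynomial σ ℝ)) \ {f₀})) := by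
  rw [D, Submodule.span_le]
  rintro x ⟨i, j, hi, hj, hij, p, hp, q, hq, rfl⟩
  have key : ∀ n : ℕ, n < m → ∀ r : MvPolynomial σ ℝ,
      r ∈ V (Algebra.adjoin ℝ (S : Set (MvPolynomial σ ℝ))) n →
      r ∈ Algebra.adjoin ℝ ((S : Set (MvPolynomial σ ℝ)) \ {f₀}) := by
    intro n hn r hr
    have hr' := L2 S hS0 hShom rfl hr
    have hle : Submodule.span ℝ
        {w : MvPolynomial σ ℝ |
          w ∈ Submonoid.closure (S : Set (MvPolynomial σ ℝ)) ∧ w.IsHomogeneous n} ≤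
        Subalgebra.toSubmodule (Algebra.adjoin ℝ ((S : Set (MvPolynomial σ ℝ)) \ {f₀})) := by
      rw [Submodule.span_le]
      rintro w ⟨hw, hwn⟩
      exact L4 S hS0 hShom m f₀ hf₀ hf₀0 w hw n hn hwn
    exact hle hr'
  have hpi : i < m := by omega
  have hqj : j < m := by omega
  exact (Subalgebra.mem_toSubmodule _).2
    (mul_mem (key i hpi p hp) (key j hqj q hq))

end lemmas

open scoped Classical in
/-- The number of degree-`m` elements in a minimal generating set equals the
dimension of an invariant of the algebra itself. -/
theorem count_eq (S : Finset (MvPolynomial σ ℝ))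
    (hS0 : ∀ f ∈ S, f ≠ 0)
    (hShom : ∀ f ∈ S, ∃ d : ℕ, 0 < d ∧ f.IsHomogeneous d)
    (hSmin : ∀ f ∈ S, f ∉ Algebra.adjoin ℝ ((S : Set (MvPolynomial σ ℝ)) \ {f}))
    (m : ℕ) (hm : 0 < m) :
    (S.filter (fun f => f.IsHomogeneous m)).card
      = Module.finrank ℝ
          (Submodule.map (D (Algebra.adjoin ℝ (S : Set (MvPolynomial σ ℝ))) m).mkQ
            (V (Algebra.adjoin ℝ (S : Set (MvPolynomial σ ℝ))) m)) := by
  set A := Algebra.adjoin ℝ (S : Set (MvPolynomial σ ℝ)) with hA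
  set Sm := S.filter (fun f => f.IsHomogeneous m) with hSm
  set π := (D A m).mkQ with hπ
  have hSmV : ∀ f ∈ Sm, f ∈ V A m := by
    intro f hf
    rw [hSm, Finset.mem_filter] at hf
    exact Submodule.mem_inf.2 ⟨(Subalgebra.mem_toSubmodule _).2
      (Algebra.subset_adjoin hf.1), (mem_homogeneousSubmodule m f).2 hf.2⟩
  -- linear independence of the images of the degree-m generators
  have hind : LinearIndependent ℝ (fun f : Sm => π (f : MvPolynomial σ ℝ)) := by
    rw [Fintype.linearIndependent_iff]
    intro g hg
    by_contra hcon
    push_neg at hcon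
    obtain ⟨f₀, hgf₀⟩ := hcon
    have hmemD : (∑ f : Sm, g f • (f : MvPolynomial σ ℝ)) ∈ D A m := by
      rw [← Submodule.Quotient.mk_eq_zero (D A m)]
      have h2 : Submodule.Quotient.mk (p := D A m) (∑ f : Sm, g f • (f : MvPolynomial σ ℝ))
          = ∑ f : Sm, g f • π (f : MvPolynomial σ ℝ) := by
        rw [← Submodule.mkQ_apply, map_sum]
        simp [hπ]
      rw [h2, hg]
    have hf₀S : (f₀ : MvPolynomial σ ℝ) ∈ S := (Finset.mem_filter.1 f₀.2).1
    have hf₀m : (f₀ : MvPolynomial σ ℝ).IsHomogeneous m := (Finset.mem_filter.1 f₀.2).2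
    have hf₀0 : (f₀ : MvPolynomial σ ℝ) ≠ 0 := hS0 _ hf₀S
    -- the submodule of the adjoin of S \ {f₀}
    set B := Subalgebra.toSubmodule
      (Algebra.adjoin ℝ ((S : Set (MvPolynomial σ ℝ)) \ {(f₀ : MvPolynomial σ ℝ)})) with hB
    have hDB : D A m ≤ B := L5 S hS0 hShom m _ hf₀m hf₀0
    have hothers : ∀ f ∈ (Finset.univ.erase f₀), g f • (f : MvPolynomial σ ℝ) ∈ B := by
      intro f hf
      have hfne : f ≠ f₀ := (Finset.mem_erase.1 hf).1
      have hfS : (f : MvPolynomial σ ℝ) ∈ S := (Finset.mem_filter.1 f.2).1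
      have hfne' : (f : MvPolynomial σ ℝ) ≠ (f₀ : MvPolynomial σ ℝ) := by
        intro h
        exact hfne (Subtype.ext h)
      exact Submodule.smul_mem _ _ ((Subalgebra.mem_toSubmodule _).2
        (Algebra.subset_adjoin ⟨hfS, hfne'⟩))
    have hsum : g f₀ • (f₀ : MvPolynomial σ ℝ)
        = (∑ f : Sm, g f • (f : MvPolynomial σ ℝ))
          - ∑ f ∈ (Finset.univ.erase f₀), g f • (f : MvPolynomial σ ℝ) := by
      rw [← Finset.add_sum_erase _ _ (Finset.mem_univ f₀)]
      ring
    have hf₀B : (f₀ : MvPolynomial σ ℝ) ∈ B := by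
      have h1 : g f₀ • (f₀ : MvPolynomial σ ℝ) ∈ B := by
        rw [hsum]
        exact Submodule.sub_mem _ (hDB hmemD) (Submodule.sum_mem _ hothers)
      have := Submodule.smul_mem B (g f₀)⁻¹ h1
      rwa [smul_smul, inv_mul_cancel₀ hgf₀, one_smul] at this
    exact hSmin _ hf₀S hf₀B
  -- the images span the image of V A m
  have hVle : V A m ≤ Submodule.span ℝ (Sm : Set (MvPolynomial σ ℝ)) ⊔ D A m := by
    intro x hx
    have hx' := L2 S hS0 hShom hA hx
    refine Submodule.span_le.2 ?_ hx'
    rintro w ⟨hw, hwm⟩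
    exact L3 S hS0 hShom m hm w hw hwm
  have hspan : Submodule.map π (V A m)
      = Submodule.span ℝ (π '' (Sm : Set (MvPolynomial σ ℝ))) := by
    apply le_antisymm
    · refine le_trans (Submodule.map_mono hVle) ?_
      rw [Submodule.map_sup, Submodule.map_span]
      have hDbot : Submodule.map π (D A m) = ⊥ := by
        apply le_bot_iff.1
        rintro y ⟨x, hx, rfl⟩
        simp only [hπ, Submodule.mem_bot, Submodule.mkQ_apply,
          Submodule.Quotient.mk_eq_zero]
        exact hx
      rw [hDbot, sup_bot_eq]
    · rw [Submodule.span_le]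
      rintro y ⟨f, hf, rfl⟩
      exact Submodule.mem_map_of_mem (hSmV f hf)
  rw [hspan]
  have hrange : π '' (Sm : Set (MvPolynomial σ ℝ))
      = Set.range (fun f : Sm => π (f : MvPolynomial σ ℝ)) := by
    ext y
    simp [Set.image_eq_range]
  rw [hrange, finrank_span_eq_card hind, Fintype.card_coe]

end MIBAux

open scoped Classical in
theorem minimal_integrity_basis_degree_counts_fixed
    {σ : Type*} [Fintype σ] (S T : Finset (MvPolynomial σ ℝ))
    (hS0 : ∀ f ∈ S, f ≠ 0) (hT0 : ∀ f ∈ T, f ≠ 0)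
    (hShom : ∀ f ∈ S, ∃ d : ℕ, 0 < d ∧ f.IsHomogeneous d)
    (hThom : ∀ f ∈ T, ∃ d : ℕ, 0 < d ∧ f.IsHomogeneous d)
    (hadj : Algebra.adjoin ℝ (S : Set (MvPolynomial σ ℝ)) =
      Algebra.adjoin ℝ (T : Set (MvPolynomial σ ℝ)))
    (hSmin : ∀ f ∈ S, f ∉ Algebra.adjoin ℝ ((S : Set (MvPolynomial σ ℝ)) \ {f}))
    (hTmin : ∀ f ∈ T, f ∉ Algebra.adjoin ℝ ((T : Set (MvPolynomial σ ℝ)) \ {f}))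
    (m : ℕ) (hm : 0 < m) :
    (S.filter (fun f => f.IsHomogeneous m)).card
      = (T.filter (fun f => f.IsHomogeneous m)).card := by
  rw [MIBAux.count_eq S hS0 hShom hSmin m hm, MIBAux.count_eq T hT0 hThom hTmin m hm, hadj]
end

section
/- Let n ≥ 2 and let g ∈ Matrix (Fin n) (Fin n) ℝ be symmetric and invertible. Suppose f : Matrix (Fin n) (Fin n) ℝ →ₗ[ℝ] ℝ is an ℝ-linear functional satisfying f (P * A * Pᵀ) = f A for every matrix A and every g-orthogonal matrix P (i.e., every P with Pᵀ * g * P = g). Then there exists c ∈ ℝ such that f A = c * trace(A * g) for all A. -/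
/-!
Write `f A = tr (A * g * M)`. Invariance under `A ↦ P * A * Pᵀ` for a `g`-orthogonal `P` says
exactly that `M` commutes with `P`. Taking for `P` the `g`-reflection in an anisotropic vector `v`
shows that `M` commutes with the rank-one matrix `v (g v)ᵀ`; since anisotropic vectors are dense,
this holds for every `v`. Hence every vector is an eigenvector of `M`, so `M` is a scalar.
-/

open Matrix

namespace Matrix

variable {ι : Type*} [Fintype ι]

theorem exists_eq_trace_mul [DecidableEq ι] {R : Type*} [CommSemiring R]
    (f : Matrix ι ι R →ₗ[R] R) : ∃ N : Matrix ι ι R, ∀ A, f A = (A * N).trace := by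
  refine ⟨(of fun i j => f (single i j 1))ᵀ, fun A => ?_⟩
  have hf : f = traceLinearMap ι R R ∘ₗ
      LinearMap.mulRight R (of fun i j => f (single i j 1))ᵀ := by
    apply Matrix.ext_linearMap
    intro i j
    ext
    simp [trace_single_mul]
  exact LinearMap.congr_fun hf A

theorem commute_of_trace_conj_invariant [DecidableEq ι] {R : Type*} [CommRing R]
    {g M P : Matrix ι ι R} (hg : IsUnit g.det) (hP : Pᵀ * g * P = g)
    (h : ∀ A, (P * A * Pᵀ * (g * M)).trace = (A * (g * M)).trace) : Commute M P := by
  have hconj : Pᵀ * (g * M) * P = g * M := ext_iff_trace_mul_left.mpr fun A => by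
    rw [← h]
    simp only [Matrix.mul_assoc]
    rw [trace_mul_comm P]
    simp only [Matrix.mul_assoc]
  have hdet : IsUnit (Pᵀ * g).det := by
    refine isUnit_of_mul_isUnit_left (y := P.det) ?_
    rwa [← det_mul, hP]
  refine ((isUnit_iff_isUnit_det _).mpr hdet).mul_left_cancel ?_
  calc Pᵀ * g * (M * P) = Pᵀ * (g * M) * P := by simp only [Matrix.mul_assoc]
    _ = Pᵀ * g * P * M := by rw [hconj, hP]
    _ = Pᵀ * g * (P * M) := by simp only [Matrix.mul_assoc]

section

variable [DecidableEq ι] {K : Type*} [Field K]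

def reflection (g : Matrix ι ι K) (v : ι → K) : Matrix ι ι K :=
  1 - (2 / (v ⬝ᵥ g *ᵥ v)) • vecMulVec v (g *ᵥ v)

theorem reflection_transpose_mul_mul_self {g : Matrix ι ι K} (hg : gᵀ = g) {v : ι → K}
    (hv : v ⬝ᵥ g *ᵥ v ≠ 0) : (reflection g v)ᵀ * g * reflection g v = g := by
  have hvg : v ᵥ* g = g *ᵥ v := by rw [← mulVec_transpose, hg]
  have hw : vecMulVec (g *ᵥ v) (g *ᵥ v) *ᵥ v = (v ⬝ᵥ g *ᵥ v) • (g *ᵥ v) := by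
    rw [vecMulVec_mulVec, op_smul_eq_smul, dotProduct_comm]
  simp only [reflection, transpose_sub, transpose_one, transpose_smul, transpose_vecMulVec,
    sub_mul, mul_sub, Matrix.one_mul, Matrix.mul_one, Matrix.smul_mul, Matrix.mul_smul,
    vecMulVec_mul, mul_vecMulVec, hvg, smul_mulVec, hw, smul_vecMulVec]
  match_scalars <;> field_simp; ring

theorem commute_vecMulVec_of_commute_reflection [NeZero (2 : K)] {g M : Matrix ι ι K}
    {v : ι → K} (hv : v ⬝ᵥ g *ᵥ v ≠ 0) (h : Commute M (reflection g v)) :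
    Commute M (vecMulVec v (g *ᵥ v)) := by
  have hs : Commute M ((2 / (v ⬝ᵥ g *ᵥ v)) • vecMulVec v (g *ᵥ v)) := by
    simpa [reflection] using (Commute.one_right M).sub_right h
  exact (Commute.smul_right_iff₀ (div_ne_zero two_ne_zero hv)).mp hs

theorem eq_zero_of_forall_dotProduct_mulVec_self_eq_zero [NeZero (2 : K)] {g : Matrix ι ι K}
    (hg : gᵀ = g) (h : ∀ v, v ⬝ᵥ g *ᵥ v = 0) : g = 0 := by
  have hpolar : ∀ v w, v ⬝ᵥ g *ᵥ w = 0 := by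
    intro v w
    have hsymm : w ⬝ᵥ g *ᵥ v = v ⬝ᵥ g *ᵥ w := by
      rw [dotProduct_comm, dotProduct_mulVec, ← mulVec_transpose, hg]
    have hsum := h (v + w)
    simp only [mulVec_add, dotProduct_add, add_dotProduct, h, hsymm] at hsum
    exact (mul_eq_zero.mp ((two_mul _).trans (by simpa using hsum))).resolve_left two_ne_zero
  ext i j
  simpa using hpolar (Pi.single i 1) (Pi.single j 1)

end

theorem dense_setOf_dotProduct_mulVec_self_ne_zero {g : Matrix ι ι ℝ} {u : ι → ℝ}
    (hu : u ⬝ᵥ g *ᵥ u ≠ 0) : Dense {v : ι → ℝ | v ⬝ᵥ g *ᵥ v ≠ 0} := by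
  intro v
  let line : ℝ → ι → ℝ := fun t => v + t • u
  have hline : Continuous line := by fun_prop
  let p : Polynomial ℝ := .C (u ⬝ᵥ g *ᵥ u) * .X ^ 2 + .C (v ⬝ᵥ g *ᵥ u + u ⬝ᵥ g *ᵥ v) * .X
    + .C (v ⬝ᵥ g *ᵥ v)
  have hp : p ≠ 0 := by
    rw [← Polynomial.leadingCoeff_ne_zero, Polynomial.leadingCoeff_quadratic hu]
    exact hu
  have heval : ∀ t, line t ⬝ᵥ g *ᵥ line t = p.eval t := by
    intro t
    simp only [line, p, mulVec_add, mulVec_smul, dotProduct_add, add_dotProduct, dotProduct_smul,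
      smul_dotProduct, smul_eq_mul, Polynomial.eval_add, Polynomial.eval_mul, Polynomial.eval_C,
      Polynomial.eval_pow, Polynomial.eval_X]
    ring
  have hdense : Dense (line ⁻¹' {v | v ⬝ᵥ g *ᵥ v ≠ 0}) := by
    convert (Polynomial.finite_setOfPred_isRoot hp).countable.dense_compl ℝ using 1
    ext t
    simp [heval]
  simpa [line] using hline.closure_preimage_subset _ (hdense 0)

theorem commute_vecMulVec_of_forall_anisotropic [DecidableEq ι] {g M : Matrix ι ι ℝ}
    (hg : gᵀ = g) (h : ∀ v, v ⬝ᵥ g *ᵥ v ≠ 0 → Commute M (vecMulVec v (g *ᵥ v))) (v : ι → ℝ) :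
    Commute M (vecMulVec v (g *ᵥ v)) := by
  by_cases hani : ∃ u, u ⬝ᵥ g *ᵥ u ≠ 0
  · obtain ⟨u, hu⟩ := hani
    have hclosed : IsClosed {v : ι → ℝ | Commute M (vecMulVec v (g *ᵥ v))} :=
      isClosed_eq (by fun_prop) (by fun_prop)
    exact hclosed.closure_subset_iff.mpr h (dense_setOf_dotProduct_mulVec_self_ne_zero hu v)
  · push Not at hani
    simp [eq_zero_of_forall_dotProduct_mulVec_self_eq_zero hg hani]

theorem exists_mulVec_eq_smul_of_commute_vecMulVec {M : Matrix ι ι ℝ} {v w : ι → ℝ} (hw : w ≠ 0)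
    (h : Commute M (vecMulVec v w)) : ∃ c : ℝ, M *ᵥ v = c • v := by
  have hww : w ⬝ᵥ w ≠ 0 := dotProduct_self_eq_zero.not.mpr hw
  refine ⟨(w ᵥ* M ⬝ᵥ w) / (w ⬝ᵥ w), ?_⟩
  have happ := congrArg (· *ᵥ w) h.eq
  simp only [mul_vecMulVec, vecMulVec_mul, vecMulVec_mulVec, op_smul_eq_smul] at happ
  rw [div_eq_inv_mul, mul_smul, ← happ, inv_smul_smul₀ hww]

theorem exists_eq_smul_one_of_forall_exists_mulVec_eq_smul [DecidableEq ι] {K : Type*} [Field K]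
    {M : Matrix ι ι K} (h : ∀ v, ∃ c : K, M *ᵥ v = c • v) : ∃ c : K, M = c • 1 := by
  obtain ⟨c, hc⟩ := (toLin' M).exists_eq_smul_id_of_forall_notLinearIndependent fun v => by
    obtain ⟨c, hcv⟩ := h v
    rw [LinearIndependent.pair_iff]
    push Not
    exact ⟨c, -1, by simp [hcv], by simp⟩
  refine ⟨c, ?_⟩
  rw [← LinearMap.toMatrix'_toLin' M, hc, map_smul, Module.End.one_eq_id, LinearMap.toMatrix'_id]

end Matrix

theorem linear_invariant_proportional_to_trace_general
    {n : ℕ} (g : Matrix (Fin n) (Fin n) ℝ)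
    (hg : gᵀ = g) (hgdet : IsUnit g.det)
    (f : Matrix (Fin n) (Fin n) ℝ →ₗ[ℝ] ℝ)
    (hf : ∀ (A P : Matrix (Fin n) (Fin n) ℝ), Pᵀ * g * P = g → f (P * A * Pᵀ) = f A) :
    ∃ c : ℝ, ∀ A : Matrix (Fin n) (Fin n) ℝ, f A = c * (A * g).trace := by
  obtain ⟨N, hN⟩ := exists_eq_trace_mul f
  set M := g⁻¹ * N
  have hgM : g * M = N := mul_nonsing_inv_cancel_left g N hgdet
  have hcomm : ∀ P, Pᵀ * g * P = g → Commute M P := fun P hP =>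
    commute_of_trace_conj_invariant hgdet hP fun A => by rw [hgM, ← hN, ← hN, hf A P hP]
  have hrankOne : ∀ v, Commute M (vecMulVec v (g *ᵥ v)) :=
    commute_vecMulVec_of_forall_anisotropic hg fun v hv =>
      commute_vecMulVec_of_commute_reflection hv
        (hcomm _ (reflection_transpose_mul_mul_self hg hv))
  have heigen : ∀ v, ∃ c : ℝ, M *ᵥ v = c • v := by
    intro v
    rcases eq_or_ne v 0 with rfl | hv
    · exact ⟨0, by simp⟩
    exact exists_mulVec_eq_smul_of_commute_vecMulVec
      (fun hgv => hv (eq_zero_of_mulVec_eq_zero hgdet.ne_zero hgv)) (hrankOne v)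
  obtain ⟨c, hc⟩ := exists_eq_smul_one_of_forall_exists_mulVec_eq_smul heigen
  refine ⟨c, fun A => ?_⟩
  rw [hN, ← hgM, hc, Matrix.mul_smul, Matrix.mul_one, Matrix.mul_smul, trace_smul, smul_eq_mul]

theorem linear_invariant_proportional_to_trace
    {n : ℕ} (hn : 2 ≤ n) (g : Matrix (Fin n) (Fin n) ℝ)
    (hg : gᵀ = g) (hgdet : IsUnit g.det)
    (f : Matrix (Fin n) (Fin n) ℝ →ₗ[ℝ] ℝ)
    (hf : ∀ (A P : Matrix (Fin n) (Fin n) ℝ), Pᵀ * g * P = g → f (P * A * Pᵀ) = f A) :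
    ∃ c : ℝ, ∀ A : Matrix (Fin n) (Fin n) ℝ, f A = c * (A * g).trace :=
  linear_invariant_proportional_to_trace_general g hg hgdet f hf
end

section
/- Let g ∈ Matrix (Fin n) (Fin n) ℝ be symmetric and invertible and let A ∈ Matrix (Fin n) (Fin n) ℝ be antisymmetric (Aᵀ = −A). Then for every odd natural number k with 1 ≤ k ≤ n, the coefficient of λ^{n−k} in the characteristic polynomial of A * g vanishes: (Matrix.charpoly (A * g)).coeff (n − k) = 0. -/
open Matrix Polynomial

private lemma charpoly_transpose' {n : ℕ} (M : Matrix (Fin n) (Fin n) ℝ) :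
    (Mᵀ).charpoly = M.charpoly := by
  unfold Matrix.charpoly
  rw [← Matrix.det_transpose]
  congr 1
  ext i j
  by_cases h : i = j
  · subst h; simp [charmatrix_apply_eq]
  · rw [transpose_apply, charmatrix_apply_ne _ _ _ h, charmatrix_apply_ne _ _ _ (Ne.symm h),
      transpose_apply]

private lemma charpoly_mul_comm' {n : ℕ} (g A : Matrix (Fin n) (Fin n) ℝ)
    (hgdet : IsUnit g.det) : (g * A).charpoly = (A * g).charpoly := by
  have key : (C : ℝ →+* ℝ[X]).mapMatrix g * charmatrix (A * g)
      = charmatrix (g * A) * (C : ℝ →+* ℝ[X]).mapMatrix g := by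
    unfold charmatrix
    rw [mul_sub, sub_mul, _root_.map_mul, _root_.map_mul, mul_assoc]
    congr 1
    exact (scalar_commute X (fun r' => Commute.all X r') _).symm
  have hd : IsUnit ((C : ℝ →+* ℝ[X]).mapMatrix g).det := by
    rw [← RingHom.map_det]
    exact hgdet.map _
  have h2 := congrArg Matrix.det key
  rw [det_mul, det_mul, mul_comm (charmatrix (g * A)).det] at h2
  unfold Matrix.charpoly
  exact mul_left_cancel₀ hd.ne_zero h2.symm

private lemma coeff_comp_neg_X' (p : ℝ[X]) (i : ℕ) :
    (p.comp (-X)).coeff i = (-1) ^ i * p.coeff i := by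
  induction p using Polynomial.induction_on' with
  | add p q hp hq => simp [add_comp, hp, hq, mul_add]
  | monomial j a =>
    rw [monomial_comp, neg_pow, ← C_1, ← C_neg, ← C_pow, mul_left_comm, ← mul_assoc, ← C_mul,
      C_mul_X_pow_eq_monomial, coeff_monomial, coeff_monomial]
    rcases eq_or_ne i j with rfl | h
    · simp [mul_comm]
    · simp [Ne.symm h]

private lemma charpoly_neg' {n : ℕ} (M : Matrix (Fin n) (Fin n) ℝ) :
    (M.charpoly).comp (-X) = (-1) ^ n * (-M).charpoly := by
  have hmap : (charmatrix M).map (eval₂RingHom C (-X : ℝ[X])) = -(charmatrix (-M)) := by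
    ext i j
    by_cases h : i = j
    · subst h
      simp [charmatrix_apply_eq, eval₂_sub, sub_eq_add_neg, add_comm]
    · rw [map_apply, charmatrix_apply_ne _ _ _ h, neg_apply, charmatrix_apply_ne _ _ _ h]
      simp
  have : (eval₂RingHom C (-X : ℝ[X])) (charmatrix M).det = ((charmatrix M).map (eval₂RingHom C (-X : ℝ[X]))).det := by
    rw [RingHom.map_det]; rfl
  rw [Matrix.charpoly, Matrix.charpoly]
  calc (charmatrix M).det.comp (-X) = (eval₂RingHom C (-X : ℝ[X])) (charmatrix M).det := rfl
    _ = ((charmatrix M).map (eval₂RingHom C (-X : ℝ[X]))).det := this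
    _ = (-(charmatrix (-M))).det := by rw [hmap]
    _ = (-1) ^ n * (charmatrix (-M)).det := by rw [det_neg]; simp

theorem charpoly_odd_coeff_antisymmetric_zero
    {n : ℕ} (g : Matrix (Fin n) (Fin n) ℝ) (hg : gᵀ = g) (hgdet : IsUnit g.det)
    (A : Matrix (Fin n) (Fin n) ℝ) (hA : Aᵀ = -A)
    (k : ℕ) (hk : Odd k) (hk1 : 1 ≤ k) (hkn : k ≤ n) :
    (Matrix.charpoly (A * g)).coeff (n - k) = 0 := by
  have hT : (A * g)ᵀ = -(g * A) := by
    rw [transpose_mul, hg, hA, mul_neg]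
  have h1 : (A * g).charpoly = (-(g * A)).charpoly := by
    rw [← hT, charpoly_transpose']
  have h2 : (g * A).charpoly = (A * g).charpoly := charpoly_mul_comm' g A hgdet
  have h3 := congrArg (fun p => Polynomial.coeff p (n - k)) (charpoly_neg' (g * A))
  simp only [coeff_comp_neg_X'] at h3
  set c := (Matrix.charpoly (A * g)).coeff (n - k) with hc
  have h4 : ((-1 : ℝ[X]) ^ n * Matrix.charpoly (-(g * A))).coeff (n - k) = (-1) ^ n * c := by
    rw [← C_1, ← C_neg, ← C_pow, coeff_C_mul, ← h1]
  rw [h4, h2, ← hc] at h3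
  -- h3 : (-1)^(n-k) * c = (-1)^n * c
  have hpow : ((-1 : ℝ)) ^ n = (-1) ^ (n - k) * (-1) ^ k := by
    rw [← pow_add, Nat.sub_add_cancel hkn]
  rw [hpow, mul_assoc] at h3
  have h5 : c = (-1 : ℝ) ^ k * c :=
    mul_left_cancel₀ (pow_ne_zero _ (by norm_num)) h3
  rw [hk.neg_one_pow, neg_one_mul] at h5
  linarith
end

section
/- Let g = Matrix.diagonal ![1, −1, −1, −1] ∈ Matrix (Fin 4) (Fin 4) ℝ, let A ∈ Matrix (Fin 4) (Fin 4) ℝ be antisymmetric (Aᵀ = −A), and let P ∈ Matrix (Fin 4) (Fin 4) ℝ satisfy Pᵀ * g * P = g and det P = 1. Set A' = P * A * Pᵀ, and define e_i = A i 0, e'_i = A' i 0 for i = 1, 2, 3 and b₁ = A 3 2, b₂ = A 1 3, b₃ = A 2 1, b'₁ = A' 3 2, b'₂ = A' 1 3, b'₃ = A' 2 1. Then e'₁b'₁ + e'₂b'₂ + e'₃b'₃ = e₁b₁ + e₂b₂ + e₃b₃. -/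
/-!
Written out, `e · b = A₁₀ A₃₂ + A₂₀ A₁₃ + A₃₀ A₂₁` is, for antisymmetric `A`, the Pfaffian
`Pf A = A₀₁ A₂₃ - A₀₂ A₁₃ + A₀₃ A₁₂`. Congruence `A ↦ P A Pᵀ` preserves antisymmetry and
multiplies the Pfaffian by `det P`, so `e · b` is invariant as soon as `det P = 1`.
-/

open Matrix

namespace Matrix

variable {R : Type*} [CommRing R]

theorem det_fin_four (M : Matrix (Fin 4) (Fin 4) R) :
    M.det =
      M 0 0 * (M 1 1 * (M 2 2 * M 3 3 - M 2 3 * M 3 2) - M 1 2 * (M 2 1 * M 3 3 - M 2 3 * M 3 1)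
        + M 1 3 * (M 2 1 * M 3 2 - M 2 2 * M 3 1))
      - M 0 1 * (M 1 0 * (M 2 2 * M 3 3 - M 2 3 * M 3 2) - M 1 2 * (M 2 0 * M 3 3 - M 2 3 * M 3 0)
        + M 1 3 * (M 2 0 * M 3 2 - M 2 2 * M 3 0))
      + M 0 2 * (M 1 0 * (M 2 1 * M 3 3 - M 2 3 * M 3 1) - M 1 1 * (M 2 0 * M 3 3 - M 2 3 * M 3 0)
        + M 1 3 * (M 2 0 * M 3 1 - M 2 1 * M 3 0))
      - M 0 3 * (M 1 0 * (M 2 1 * M 3 2 - M 2 2 * M 3 1) - M 1 1 * (M 2 0 * M 3 2 - M 2 2 * M 3 0)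
        + M 1 2 * (M 2 0 * M 3 1 - M 2 1 * M 3 0)) := by
  rw [det_succ_row_zero, Fin.sum_univ_four]
  simp [det_fin_three, Fin.succAbove, Fin.lt_def]
  ring

def pfaffianFinFour (A : Matrix (Fin 4) (Fin 4) R) : R :=
  A 0 1 * A 2 3 - A 0 2 * A 1 3 + A 0 3 * A 1 2

theorem apply_eq_neg_of_transpose_eq_neg {n : Type*} {A : Matrix n n R} (hA : Aᵀ = -A)
    (i j : n) : A j i = -A i j := by
  simpa using congrFun₂ hA i j

theorem transpose_mul_mul_transpose_eq_neg {m n : Type*} [Fintype n] {A : Matrix n n R}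
    (hA : Aᵀ = -A) (P : Matrix m n R) : (P * A * Pᵀ)ᵀ = -(P * A * Pᵀ) := by
  simp [transpose_mul, hA, Matrix.mul_assoc]

theorem pfaffianFinFour_eq_of_transpose_eq_neg {A : Matrix (Fin 4) (Fin 4) R} (hA : Aᵀ = -A) :
    pfaffianFinFour A = A 1 0 * A 3 2 + A 2 0 * A 1 3 + A 3 0 * A 2 1 := by
  have hA := apply_eq_neg_of_transpose_eq_neg hA
  rw [pfaffianFinFour, hA 0 1, hA 0 2, hA 0 3, hA 1 2, hA 2 3]
  ring

/-- Over a ring of characteristic two `Aᵀ = -A` does not force a zero diagonal, and the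
identity needs one. -/
theorem pfaffianFinFour_mul_mul_transpose {A : Matrix (Fin 4) (Fin 4) R} (hA : Aᵀ = -A)
    (hdiag : ∀ i, A i i = 0) (P : Matrix (Fin 4) (Fin 4) R) :
    pfaffianFinFour (P * A * Pᵀ) = P.det * pfaffianFinFour A := by
  have hA := apply_eq_neg_of_transpose_eq_neg hA
  simp only [pfaffianFinFour, det_fin_four, mul_apply, Fin.sum_univ_four, transpose_apply]
  rw [hA 0 1, hA 0 2, hA 0 3, hA 1 2, hA 1 3, hA 2 3, hdiag 0, hdiag 1, hdiag 2, hdiag 3]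
  ring

end Matrix

theorem dot_eb_pseudoscalar_invariant_general
    (A P : Matrix (Fin 4) (Fin 4) ℝ) (hA : Aᵀ = -A)
    (hPdet : P.det = 1)
    (A' : Matrix (Fin 4) (Fin 4) ℝ) (hA' : A' = P * A * Pᵀ)
    (e₁ e₂ e₃ b₁ b₂ b₃ e₁' e₂' e₃' b₁' b₂' b₃' : ℝ)
    (he₁ : e₁ = A 1 0) (he₂ : e₂ = A 2 0) (he₃ : e₃ = A 3 0)
    (hb₁ : b₁ = A 3 2) (hb₂ : b₂ = A 1 3) (hb₃ : b₃ = A 2 1)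
    (he₁' : e₁' = A' 1 0) (he₂' : e₂' = A' 2 0) (he₃' : e₃' = A' 3 0)
    (hb₁' : b₁' = A' 3 2) (hb₂' : b₂' = A' 1 3) (hb₃' : b₃' = A' 2 1) :
    e₁' * b₁' + e₂' * b₂' + e₃' * b₃' = e₁ * b₁ + e₂ * b₂ + e₃ * b₃ := by
  subst hA' he₁ he₂ he₃ hb₁ hb₂ hb₃ he₁' he₂' he₃' hb₁' hb₂' hb₃'
  have hdiag (i : Fin 4) : A i i = 0 :=
    self_eq_neg.mp (apply_eq_neg_of_transpose_eq_neg hA i i)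
  rw [← pfaffianFinFour_eq_of_transpose_eq_neg hA,
    ← pfaffianFinFour_eq_of_transpose_eq_neg (transpose_mul_mul_transpose_eq_neg hA P),
    pfaffianFinFour_mul_mul_transpose hA hdiag, hPdet, one_mul]

theorem dot_eb_pseudoscalar_invariant
    (A P : Matrix (Fin 4) (Fin 4) ℝ) (hA : Aᵀ = -A)
    (hP : Pᵀ * Matrix.diagonal ![1, -1, -1, -1] * P = Matrix.diagonal ![1, -1, -1, -1])
    (hPdet : P.det = 1)
    (A' : Matrix (Fin 4) (Fin 4) ℝ) (hA' : A' = P * A * Pᵀ)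
    (e₁ e₂ e₃ b₁ b₂ b₃ e₁' e₂' e₃' b₁' b₂' b₃' : ℝ)
    (he₁ : e₁ = A 1 0) (he₂ : e₂ = A 2 0) (he₃ : e₃ = A 3 0)
    (hb₁ : b₁ = A 3 2) (hb₂ : b₂ = A 1 3) (hb₃ : b₃ = A 2 1)
    (he₁' : e₁' = A' 1 0) (he₂' : e₂' = A' 2 0) (he₃' : e₃' = A' 3 0)
    (hb₁' : b₁' = A' 3 2) (hb₂' : b₂' = A' 1 3) (hb₃' : b₃' = A' 2 1) :
    e₁' * b₁' + e₂' * b₂' + e₃' * b₃' = e₁ * b₁ + e₂ * b₂ + e₃ * b₃ :=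
  dot_eb_pseudoscalar_invariant_general A P hA hPdet A' hA' e₁ e₂ e₃ b₁ b₂ b₃ e₁' e₂' e₃' b₁' b₂'
    b₃' he₁ he₂ he₃ hb₁ hb₂ hb₃ he₁' he₂' he₃' hb₁' hb₂' hb₃'
end
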